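/- Suppose the target training samples D_t = {Z_j^t}_{j=1}^m are i.i.d. from P_Z^t and the nonnegative loss ℓ(w,Z) is Γ(σ_s², c_s)-sub-Gamma under P_Z^t ⊗ P_W. Then for any learning algorithm P_{W|D_s,D_t}, |gen(P_{W|D_s,D_t},P_{D_s},P_{D_t})| ≤ sqrt(2σ_s² · I(W;D_t|D_s)/m) + c_s · I(W;D_t|D_s)/m. -/

import Mathlib

/-!
STATEMENT 6: If D_t is i.i.d. from P_Z^t and ℓ(w,Z) is Γ(σ_s², c_s)-sub-Gamma under
P_Z^t ⊗ P_W, then |gen| ≤ sqrt(2σ_s²·I(W;D_t|D_s)/m) + c_s·I(W;D_t|D_s)/m.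
-/

open scoped BigOperators
open Finset

noncomputable section

namespace TransferGibbs

def KL {α : Type*} [Fintype α] (p q : α → ℝ) : ℝ :=
  ∑ x, p x * Real.log (p x / q x)

def IsPMF {α : Type*} [Fintype α] (p : α → ℝ) : Prop := (∀ x, 0 ≤ p x) ∧ ∑ x, p x = 1

def empRisk {W Z : Type*} [Fintype Z] (ℓ : W → Z → ℝ) {k : ℕ} (d : Fin k → Z) (w : W) : ℝ :=
  (∑ j, ℓ w (d j)) / k

def popRisk {W Z : Type*} [Fintype Z] (ℓ : W → Z → ℝ) {m : ℕ}
    (pT : (Fin m → Z) → ℝ) (w : W) : ℝ :=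
  ∑ dt, pT dt * empRisk ℓ dt w

def iid {Z : Type*} [Fintype Z] (m : ℕ) (pZ : Z → ℝ) (dt : Fin m → Z) : ℝ :=
  ∏ j, pZ (dt j)

def gen {W Z : Type*} [Fintype W] [Fintype Z] (ℓ : W → Z → ℝ) {n m : ℕ}
    (pS : (Fin n → Z) → ℝ) (pT : (Fin m → Z) → ℝ)
    (P : (Fin n → Z) → (Fin m → Z) → W → ℝ) : ℝ :=
  ∑ ds, ∑ dt, ∑ w, pS ds * pT dt * P ds dt w * (popRisk ℓ pT w - empRisk ℓ dt w)

def condMI {W Z : Type*} [Fintype W] [Fintype Z] {n m : ℕ}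
    (pS : (Fin n → Z) → ℝ) (pT : (Fin m → Z) → ℝ)
    (P : (Fin n → Z) → (Fin m → Z) → W → ℝ) : ℝ :=
  ∑ ds, pS ds *
    KL (fun p : W × (Fin m → Z) => pT p.2 * P ds p.2 p.1)
       (fun p : W × (Fin m → Z) => (∑ dt, pT dt * P ds dt p.1) * pT p.2)

def margW {W Z : Type*} [Fintype W] [Fintype Z] {n m : ℕ}
    (pS : (Fin n → Z) → ℝ) (pT : (Fin m → Z) → ℝ)
    (P : (Fin n → Z) → (Fin m → Z) → W → ℝ) (w : W) : ℝ :=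
  ∑ ds, ∑ dt, pS ds * pT dt * P ds dt w

/-- Cumulant generating function of `ℓ(W,Z)` under `pW ⊗ pZ`. -/
def cgfLoss {W Z : Type*} [Fintype W] [Fintype Z]
    (ℓ : W → Z → ℝ) (pW : W → ℝ) (pZ : Z → ℝ) (lam : ℝ) : ℝ :=
  Real.log (∑ w, ∑ z, pW w * pZ z *
    Real.exp (lam * (ℓ w z - ∑ w', ∑ z', pW w' * pZ z' * ℓ w' z')))

/-- `ℓ(W,Z)` is `Γ(σ_s², c_s)`-sub-Gamma under `pW ⊗ pZ`. -/
def SubGammaLoss {W Z : Type*} [Fintype W] [Fintype Z]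
    (ℓ : W → Z → ℝ) (pW : W → ℝ) (pZ : Z → ℝ) (σs2 cs : ℝ) : Prop :=
  ∀ lam : ℝ, 0 < |lam| → |lam| < 1 / cs →
    cgfLoss ℓ pW pZ lam ≤ lam ^ 2 * σs2 / (2 * (1 - cs * |lam|))

/-! Donsker–Varadhan for the law of `(W, Z_j)` against `P_W ⊗ P_Z` bounds
`λ (𝔼 ℓ(W', Z') - 𝔼 ℓ(W, Z_j))`, for independent `W' ∼ P_W` and `Z' ∼ P_Z`, by `I(W; Z_j)` plus
the cumulant generating function of the loss at `-λ`; summed over `j`, the left side is `m λ gen`.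
Since the `Z_j` are independent and independent of `D_s`, `∑ j, I(W; Z_j) ≤ I(W; D_t | D_s)`: the
gap is a relative entropy against the law under which the `Z_j` are conditionally independent
given `W`. The sub-Gamma bound at `±λ`, optimised over `λ ∈ (0, 1/c_s)`, gives the claim. -/

theorem sum_mul_le_KL_add_log_sum_mul_exp {α : Type*} [Fintype α] {p q : α → ℝ}
    (hp : IsPMF p) (hq : ∀ x, 0 ≤ q x) (hpq : ∀ x, q x = 0 → p x = 0) (f : α → ℝ) :
    ∑ x, p x * f x ≤ KL p q + Real.log (∑ x, q x * Real.exp (f x)) := by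
  have hq_pos : ∀ x, 0 < p x → 0 < q x := fun x hpx =>
    (hq x).lt_of_ne fun h => hpx.ne' (hpq x h.symm)
  set S := ∑ x, q x * Real.exp (f x)
  have hS : 0 < S := by
    obtain ⟨x, -, hx⟩ := Finset.exists_ne_zero_of_sum_ne_zero (hp.2.trans_ne one_ne_zero)
    have hpx : 0 < p x := (hp.1 x).lt_of_ne' hx
    exact (mul_pos (hq_pos x hpx) (Real.exp_pos _)).trans_le <|
      Finset.single_le_sum (fun y _ => mul_nonneg (hq y) (Real.exp_pos _).le) (Finset.mem_univ x)
  -- `log y ≤ y - 1` for the density `y` of the Gibbs measure `q e^f / S` with respect to `p`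
  have key : ∀ x, p x * f x - p x * Real.log (p x / q x) - p x * Real.log S ≤
      q x * Real.exp (f x) / S - p x := by
    intro x
    rcases (hp.1 x).eq_or_lt with hpx | hpx
    · simp only [← hpx, zero_mul, sub_zero]
      exact div_nonneg (mul_nonneg (hq x) (Real.exp_pos _).le) hS.le
    have hqx := hq_pos x hpx
    have hy : 0 < q x * Real.exp (f x) / (S * p x) := by positivity
    have hlog : Real.log (q x * Real.exp (f x) / (S * p x)) =
        f x - Real.log (p x / q x) - Real.log S := by
      rw [Real.log_div (by positivity) (by positivity), Real.log_mul hqx.ne' (Real.exp_pos _).ne',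
        Real.log_exp, Real.log_mul hS.ne' hpx.ne', Real.log_div hpx.ne' hqx.ne']
      ring
    calc p x * f x - p x * Real.log (p x / q x) - p x * Real.log S
        = p x * Real.log (q x * Real.exp (f x) / (S * p x)) := by rw [hlog]; ring
      _ ≤ p x * (q x * Real.exp (f x) / (S * p x) - 1) :=
          mul_le_mul_of_nonneg_left (Real.log_le_sub_one_of_pos hy) hpx.le
      _ = q x * Real.exp (f x) / S - p x := by field_simp
  have hsum := Finset.sum_le_sum fun x (_ : x ∈ Finset.univ) => key x
  rw [Finset.sum_sub_distrib, Finset.sum_sub_distrib, Finset.sum_sub_distrib, ← Finset.sum_mul,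
    ← Finset.sum_div, hp.2, div_self hS.ne'] at hsum
  unfold KL
  linarith

theorem KL_nonneg {α : Type*} [Fintype α] {p q : α → ℝ}
    (hp : IsPMF p) (hq : ∀ x, 0 ≤ q x) (hq_sum : ∑ x, q x ≤ 1)
    (hpq : ∀ x, q x = 0 → p x = 0) : 0 ≤ KL p q := by
  have h := sum_mul_le_KL_add_log_sum_mul_exp hp hq hpq 0
  simp only [Pi.zero_apply, mul_zero, Finset.sum_const_zero, Real.exp_zero, mul_one] at h
  linarith [Real.log_nonpos (Finset.sum_nonneg fun x _ => hq x) hq_sum]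

theorem IsPMF.prod {α β : Type*} [Fintype α] [Fintype β] {p : α → ℝ} {q : β → ℝ}
    (hp : IsPMF p) (hq : IsPMF q) : IsPMF fun x : α × β => p x.1 * q x.2 :=
  ⟨fun x => mul_nonneg (hp.1 x.1) (hq.1 x.2), by
    simp only [Fintype.sum_prod_type, ← Finset.mul_sum, hq.2, mul_one, hp.2]⟩

theorem log_div_mul_prod_sub_sum_log_div {ι : Type*} [Fintype ι] {a M c : ℝ}
    {r z : ι → ℝ} (ha : a ≠ 0) (hM : M ≠ 0) (hc : c ≠ 0) (hr : ∀ i, r i ≠ 0)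
    (hz : ∀ i, z i ≠ 0) :
    Real.log (a / (M * ∏ i, z i)) - ∑ i, Real.log (r i / (c * z i)) =
      Real.log (a / (M * ∏ i, (r i / c))) := by
  have hrc : ∀ i, r i / c ≠ 0 := fun i => div_ne_zero (hr i) hc
  have hterm : ∀ i, Real.log (r i / (c * z i)) = Real.log (r i / c) - Real.log (z i) :=
    fun i => by rw [← div_div, Real.log_div (hrc i) (hz i)]
  rw [Real.log_div ha (mul_ne_zero hM (Finset.prod_ne_zero_iff.2 fun i _ => hz i)),
    Real.log_div ha (mul_ne_zero hM (Finset.prod_ne_zero_iff.2 fun i _ => hrc i)),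
    Real.log_mul hM (Finset.prod_ne_zero_iff.2 fun i _ => hz i),
    Real.log_mul hM (Finset.prod_ne_zero_iff.2 fun i _ => hrc i),
    Real.log_prod fun i _ => hz i, Real.log_prod fun i _ => hrc i,
    Finset.sum_congr rfl fun i _ => hterm i, Finset.sum_sub_distrib]
  ring

theorem le_sqrt_add_of_forall_mul_le {G A σ2 c : ℝ} (hA : 0 ≤ A) (hc : 0 < c)
    (h : ∀ t, 0 < t → t < 1 / c → t * G ≤ A + t ^ 2 * σ2 / (2 * (1 - c * t))) :
    G ≤ √(2 * σ2 * A) + c * A := by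
  set σ := √σ2
  set B := √(2 * A)
  have hB : B ^ 2 = 2 * A := Real.sq_sqrt (by linarith)
  -- the optimal `t = B / (σ + c * B)`, perturbed so that it is admissible when `B` or `σ` vanish
  have hε : ∀ e > 0, G ≤ (B + e) * (σ + e) + c * (B + e) ^ 2 / 2 := by
    intro e he
    set b := B + e
    set s := σ + e
    have hb : 0 < b := by positivity
    have hs : 0 < s := by positivity
    set D := s + c * b
    have hD : 0 < D := by positivity
    have ht : 0 < b / D := div_pos hb hD
    have hct : 1 - c * (b / D) = s / D := by field_simp; ring
    have htc : b / D < 1 / c := by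
      rw [div_lt_div_iff₀ hD hc]; nlinarith
    have hA_le : A ≤ b ^ 2 / 2 := by nlinarith [Real.sqrt_nonneg (2 * A)]
    have hσ2 : σ2 ≤ s ^ 2 := by
      nlinarith [Real.sq_sqrt' (x := σ2), le_max_left σ2 0, Real.sqrt_nonneg σ2]
    refine le_of_mul_le_mul_left ((h _ ht htc).trans ?_) ht
    rw [hct]
    calc A + (b / D) ^ 2 * σ2 / (2 * (s / D))
        ≤ b ^ 2 / 2 + (b / D) ^ 2 * s ^ 2 / (2 * (s / D)) := by gcongr
      _ = b / D * (b * s + c * b ^ 2 / 2) := by field_simp; ring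
  have hcont : Continuous fun e : ℝ => (B + e) * (σ + e) + c * (B + e) ^ 2 / 2 := by fun_prop
  have hG := ge_of_tendsto ((hcont.tendsto 0).mono_left nhdsWithin_le_nhds)
    (eventually_nhdsWithin_of_forall (s := Set.Ioi 0) hε)
  rw [show 2 * σ2 * A = σ2 * (2 * A) by ring, Real.sqrt_mul' _ (by linarith)]
  simp only [add_zero, hB] at hG
  linarith

section Iid

variable {Z : Type*} [Fintype Z] {m : ℕ}

theorem IsPMF.iid {pZ : Z → ℝ} (hpZ : IsPMF pZ) : IsPMF (iid m pZ) :=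
  ⟨fun _ => Finset.prod_nonneg fun j _ => hpZ.1 _, by
    simp only [TransferGibbs.iid, ← Fintype.sum_pow, hpZ.2, one_pow]⟩

theorem sum_iid_mul_apply {pZ : Z → ℝ} (hpZ : IsPMF pZ) (j : Fin m) (g : Z → ℝ) :
    ∑ dt, iid m pZ dt * g (dt j) = ∑ z, pZ z * g z := by
  classical
  let f : Fin m → Z → ℝ := fun i z => pZ z * if i = j then g z else 1
  have hf : ∀ dt : Fin m → Z, iid m pZ dt * g (dt j) = ∏ i, f i (dt i) := by
    intro dt
    simp only [f, Finset.prod_mul_distrib, Finset.prod_ite_eq', Finset.mem_univ,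
      if_true, TransferGibbs.iid]
  have hsum : ∀ i, ∑ z, f i z = if i = j then ∑ z, pZ z * g z else 1 := by
    intro i
    split_ifs <;> simp [f, *, hpZ.2]
  simp only [hf, ← Fintype.prod_sum, hsum, Finset.prod_ite_eq', Finset.mem_univ, if_true]

theorem popRisk_iid {W : Type*} (hm : 0 < m) (ℓ : W → Z → ℝ) {pZ : Z → ℝ} (hpZ : IsPMF pZ)
    (w : W) :
    popRisk ℓ (iid m pZ) w = ∑ z, pZ z * ℓ w z := by
  have hm' : (m : ℝ) ≠ 0 := by positivity
  calc popRisk ℓ (iid m pZ) w = (∑ j : Fin m, ∑ dt, iid m pZ dt * ℓ w (dt j)) / m := by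
        simp only [popRisk, empRisk, mul_div_assoc', Finset.mul_sum, ← Finset.sum_div]
        rw [Finset.sum_comm]
    _ = ∑ z, pZ z * ℓ w z := by
        simp only [sum_iid_mul_apply hpZ, Finset.sum_const, Finset.card_univ, Fintype.card_fin,
          nsmul_eq_mul]
        field_simp

end Iid

section Sampling

variable {W Z : Type*} [Fintype Z] {n m : ℕ}
  (pS : (Fin n → Z) → ℝ) (pT : (Fin m → Z) → ℝ) (P : (Fin n → Z) → (Fin m → Z) → W → ℝ)

open Classical in
/-- The joint law of `(W, Z_j)`. -/
def sampleJoint (j : Fin m) (x : W × Z) : ℝ :=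
  ∑ ds, ∑ dt, if dt j = x.2 then pS ds * pT dt * P ds dt x.1 else 0

theorem sum_sampleJoint_mul [Fintype W] (j : Fin m) (g : W × Z → ℝ) :
    ∑ x, sampleJoint pS pT P j x * g x =
      ∑ ds, ∑ dt, ∑ w, pS ds * pT dt * P ds dt w * g (w, dt j) := by
  classical
  simp only [sampleJoint, Fintype.sum_prod_type, Finset.sum_mul, ite_mul, zero_mul]
  conv_lhs => enter [2, w]; rw [Finset.sum_comm]; enter [2, ds]; rw [Finset.sum_comm]
  simp only [Finset.sum_ite_eq, Finset.mem_univ, if_true]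
  rw [Finset.sum_comm]
  exact Finset.sum_congr rfl fun _ _ => Finset.sum_comm

theorem sum_sum_sampleJoint_mul [Fintype W] (g : Fin m → W × Z → ℝ) :
    ∑ j, ∑ x, sampleJoint pS pT P j x * g j x =
      ∑ ds, ∑ dt, ∑ w, pS ds * pT dt * P ds dt w * ∑ j, g j (w, dt j) := by
  simp only [sum_sampleJoint_mul, Finset.mul_sum]
  rw [Finset.sum_comm]
  refine Finset.sum_congr rfl fun ds _ => ?_
  rw [Finset.sum_comm]
  exact Finset.sum_congr rfl fun dt _ => Finset.sum_comm

theorem sum_sampleJoint_left [Fintype W] (j : Fin m) (w : W) :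
    ∑ z, sampleJoint pS pT P j (w, z) = margW pS pT P w := by
  classical
  simp only [sampleJoint, margW]
  rw [Finset.sum_comm]
  refine Finset.sum_congr rfl fun ds _ => ?_
  rw [Finset.sum_comm]
  simp only [Finset.sum_ite_eq, Finset.mem_univ, if_true]

theorem sum_mul_margW [Fintype W] (h : W → ℝ) :
    ∑ w, margW pS pT P w * h w = ∑ ds, ∑ dt, ∑ w, pS ds * pT dt * P ds dt w * h w := by
  simp only [margW, Finset.sum_mul]
  rw [Finset.sum_comm]
  exact Finset.sum_congr rfl fun _ _ => Finset.sum_comm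

variable {pS pT P}

theorem IsPMF.margW [Fintype W] (hpS : IsPMF pS) (hpT : IsPMF pT)
    (hP : ∀ ds dt, IsPMF (P ds dt)) : IsPMF (margW pS pT P) := by
  refine ⟨fun w => Finset.sum_nonneg fun ds _ => Finset.sum_nonneg fun dt _ =>
    mul_nonneg (mul_nonneg (hpS.1 ds) (hpT.1 dt)) ((hP ds dt).1 w), ?_⟩
  simpa only [mul_one, ← Finset.mul_sum, (hP _ _).2, hpT.2, hpS.2] using
    sum_mul_margW pS pT P fun _ => 1

theorem sampleJoint_nonneg (hpS : ∀ ds, 0 ≤ pS ds) (hpT : ∀ dt, 0 ≤ pT dt)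
    (hP : ∀ ds dt w, 0 ≤ P ds dt w) (j : Fin m) (x : W × Z) : 0 ≤ sampleJoint pS pT P j x :=
  Finset.sum_nonneg fun ds _ => Finset.sum_nonneg fun dt _ => by
    split_ifs
    exacts [mul_nonneg (mul_nonneg (hpS ds) (hpT dt)) (hP ds dt x.1), le_rfl]

theorem IsPMF.sampleJoint [Fintype W] (hpS : IsPMF pS) (hpT : IsPMF pT)
    (hP : ∀ ds dt, IsPMF (P ds dt)) (j : Fin m) : IsPMF (sampleJoint pS pT P j) :=
  ⟨sampleJoint_nonneg hpS.1 hpT.1 (fun ds dt => (hP ds dt).1) j, by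
    rw [Fintype.sum_prod_type]
    simp only [sum_sampleJoint_left, (hpS.margW hpT hP).2]⟩

theorem le_sampleJoint (hpS : ∀ ds, 0 ≤ pS ds) (hpT : ∀ dt, 0 ≤ pT dt)
    (hP : ∀ ds dt w, 0 ≤ P ds dt w) (j : Fin m) (ds : Fin n → Z) (dt : Fin m → Z) (w : W) :
    pS ds * pT dt * P ds dt w ≤ sampleJoint pS pT P j (w, dt j) := by
  classical
  have hterm : ∀ ds' dt', 0 ≤ if dt' j = dt j then pS ds' * pT dt' * P ds' dt' w else 0 :=
    fun ds' dt' => by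
      split_ifs
      exacts [mul_nonneg (mul_nonneg (hpS ds') (hpT dt')) (hP ds' dt' w), le_rfl]
  calc pS ds * pT dt * P ds dt w
      = if dt j = dt j then pS ds * pT dt * P ds dt w else 0 := (if_pos rfl).symm
    _ ≤ ∑ dt', if dt' j = dt j then pS ds * pT dt' * P ds dt' w else 0 :=
        Finset.single_le_sum (fun dt' _ => hterm ds dt') (Finset.mem_univ dt)
    _ ≤ sampleJoint pS pT P j (w, dt j) :=
        Finset.single_le_sum (f := fun ds' => ∑ dt', _)
          (fun ds' _ => Finset.sum_nonneg fun dt' _ => hterm ds' dt') (Finset.mem_univ ds)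

theorem le_margW [Fintype W] (hpS : ∀ ds, 0 ≤ pS ds) (hpT : ∀ dt, 0 ≤ pT dt)
    (hP : ∀ ds dt w, 0 ≤ P ds dt w) (ds : Fin n → Z) (dt : Fin m → Z) (w : W) :
    pS ds * pT dt * P ds dt w ≤ margW pS pT P w := by
  have hterm : ∀ ds' dt', 0 ≤ pS ds' * pT dt' * P ds' dt' w := fun ds' dt' =>
    mul_nonneg (mul_nonneg (hpS ds') (hpT dt')) (hP ds' dt' w)
  exact (Finset.single_le_sum (fun dt' _ => hterm ds dt') (Finset.mem_univ dt)).trans <|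
    Finset.single_le_sum (f := fun ds' => ∑ dt', pS ds' * pT dt' * P ds' dt' w)
      (fun ds' _ => Finset.sum_nonneg fun dt' _ => hterm ds' dt') (Finset.mem_univ ds)

theorem sampleJoint_le_margW [Fintype W] (hpS : ∀ ds, 0 ≤ pS ds) (hpT : ∀ dt, 0 ≤ pT dt)
    (hP : ∀ ds dt w, 0 ≤ P ds dt w) (j : Fin m) (x : W × Z) :
    sampleJoint pS pT P j x ≤ margW pS pT P x.1 := by
  rw [← sum_sampleJoint_left]
  exact Finset.single_le_sum (f := fun z => sampleJoint pS pT P j (x.1, z))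
    (fun z _ => sampleJoint_nonneg hpS hpT hP j _) (Finset.mem_univ x.2)

theorem sampleJoint_iid_eq_zero [Fintype W] {pZ : Z → ℝ} (hpS : ∀ ds, 0 ≤ pS ds)
    (hpZ : ∀ z, 0 ≤ pZ z) (hP : ∀ ds dt w, 0 ≤ P ds dt w) (j : Fin m) {x : W × Z}
    (hx : margW pS (iid m pZ) P x.1 * pZ x.2 = 0) : sampleJoint pS (iid m pZ) P j x = 0 := by
  classical
  have hiid : ∀ dt, 0 ≤ iid m pZ dt := fun dt => Finset.prod_nonneg fun i _ => hpZ _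
  rcases mul_eq_zero.1 hx with h | h
  · exact le_antisymm (h ▸ sampleJoint_le_margW hpS hiid hP j x)
      (sampleJoint_nonneg hpS hiid hP j x)
  · refine Finset.sum_eq_zero fun ds _ => Finset.sum_eq_zero fun dt _ =>
      ite_eq_right_iff.2 fun hdt => ?_
    have : iid m pZ dt = 0 := Finset.prod_eq_zero (Finset.mem_univ j) (hdt ▸ h)
    rw [this, mul_zero, zero_mul]

end Sampling

section Superadditivity

variable {W Z : Type*} [Fintype W] [Fintype Z] {n m : ℕ}
  (pS : (Fin n → Z) → ℝ) (pT : (Fin m → Z) → ℝ) (P : (Fin n → Z) → (Fin m → Z) → W → ℝ)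

/-- A sub-probability law of `(W, D_t)` given `D_s = ds`: `W` keeps its conditional law, while
the `Z_j` become independent given `W`, each with the conditional law of `Z_j` given `W`. -/
def condIndepLaw (ds : Fin n → Z) (x : W × (Fin m → Z)) : ℝ :=
  (∑ dt, pT dt * P ds dt x.1) * ∏ j, sampleJoint pS pT P j (x.1, x.2 j) / margW pS pT P x.1

variable {pS pT P}

theorem sum_condIndepLaw_le_one (hpT : IsPMF pT) (hP : ∀ ds dt, IsPMF (P ds dt))
    (ds : Fin n → Z) : ∑ x, condIndepLaw pS pT P ds x ≤ 1 := by
  have hM : ∀ w, 0 ≤ ∑ dt, pT dt * P ds dt w := fun w =>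
    Finset.sum_nonneg fun dt _ => mul_nonneg (hpT.1 dt) ((hP ds dt).1 w)
  calc ∑ x, condIndepLaw pS pT P ds x
      = ∑ w, (∑ dt, pT dt * P ds dt w) * (margW pS pT P w / margW pS pT P w) ^ m := by
        simp only [condIndepLaw, Fintype.sum_prod_type, ← Finset.mul_sum]
        refine Finset.sum_congr rfl fun w _ => ?_
        rw [← Fintype.prod_sum fun j z => sampleJoint pS pT P j (w, z) / margW pS pT P w]
        simp only [← Finset.sum_div, sum_sampleJoint_left, Finset.prod_const, Finset.card_univ,
          Fintype.card_fin]
    _ ≤ ∑ w, ∑ dt, pT dt * P ds dt w :=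
        Finset.sum_le_sum fun w _ => mul_le_of_le_one_right (hM w) <| by
          rcases eq_or_ne (margW pS pT P w) 0 with h | h
          · rw [h, zero_div]; exact pow_le_one₀ le_rfl zero_le_one
          · rw [div_self h, one_pow]
    _ = 1 := by
        rw [Finset.sum_comm]
        simp only [← Finset.mul_sum, (hP _ _).2, mul_one, hpT.2]

theorem condIndepLaw_nonneg (hpS : ∀ ds, 0 ≤ pS ds) (hpT : ∀ dt, 0 ≤ pT dt)
    (hP : ∀ ds dt w, 0 ≤ P ds dt w) (ds : Fin n → Z) (x : W × (Fin m → Z)) :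
    0 ≤ condIndepLaw pS pT P ds x :=
  mul_nonneg (Finset.sum_nonneg fun dt _ => mul_nonneg (hpT dt) (hP ds dt x.1)) <|
    Finset.prod_nonneg fun j _ => div_nonneg (sampleJoint_nonneg hpS hpT hP j _) <|
      Finset.sum_nonneg fun ds' _ => Finset.sum_nonneg fun dt _ =>
        mul_nonneg (mul_nonneg (hpS ds') (hpT dt)) (hP ds' dt x.1)

theorem sum_mul_sum_log_le_KL {pZ : Z → ℝ} (hpS : ∀ ds, 0 ≤ pS ds) (hpZ : IsPMF pZ)
    (hP : ∀ ds dt, IsPMF (P ds dt)) {ds : Fin n → Z} (hds : 0 < pS ds) :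
    ∑ x : W × (Fin m → Z), iid m pZ x.2 * P ds x.2 x.1 *
        ∑ j, Real.log (sampleJoint pS (iid m pZ) P j (x.1, x.2 j) /
          (margW pS (iid m pZ) P x.1 * pZ (x.2 j))) ≤
      KL (fun x : W × (Fin m → Z) => iid m pZ x.2 * P ds x.2 x.1)
        (fun x => (∑ dt, iid m pZ dt * P ds dt x.1) * iid m pZ x.2) := by
  have hpT := hpZ.iid (m := m)
  have hPn : ∀ ds dt w, 0 ≤ P ds dt w := fun ds dt => (hP ds dt).1
  set ν : W × (Fin m → Z) → ℝ := fun x => iid m pZ x.2 * P ds x.2 x.1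
  have hν : IsPMF ν := ⟨fun x => mul_nonneg (hpT.1 _) (hPn _ _ _), by
    simp only [ν, Fintype.sum_prod_type_right, ← Finset.mul_sum, (hP _ _).2, mul_one, hpT.2]⟩
  have hpos : ∀ x, 0 < ν x → 0 < ∑ dt, iid m pZ dt * P ds dt x.1 ∧
      0 < margW pS (iid m pZ) P x.1 ∧ ∀ j, 0 < sampleJoint pS (iid m pZ) P j (x.1, x.2 j) := by
    intro x hx
    have hjoint : 0 < pS ds * iid m pZ x.2 * P ds x.2 x.1 := by
      rw [mul_assoc]; exact mul_pos hds hx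
    refine ⟨hx.trans_le ?_, hjoint.trans_le (le_margW hpS hpT.1 hPn _ _ _),
      fun j => hjoint.trans_le (le_sampleJoint hpS hpT.1 hPn j _ _ _)⟩
    exact Finset.single_le_sum (f := fun dt => iid m pZ dt * P ds dt x.1)
      (fun dt _ => mul_nonneg (hpT.1 dt) (hPn _ _ _)) (Finset.mem_univ x.2)
  have hgap := KL_nonneg hν (condIndepLaw_nonneg hpS hpT.1 hPn ds)
    (sum_condIndepLaw_le_one hpT hP ds) fun x hx => by
      by_contra hνx
      obtain ⟨hM, hMW, hJ⟩ := hpos x ((hν.1 x).lt_of_ne' hνx)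
      exact (mul_pos hM (Finset.prod_pos fun j _ => div_pos (hJ j) hMW)).ne' hx
  unfold KL at hgap ⊢
  rw [← sub_nonneg, ← Finset.sum_sub_distrib]
  refine hgap.trans_eq (Finset.sum_congr rfl fun x _ => ?_)
  change ν x * _ = ν x * _ - ν x * _
  beta_reduce
  rcases (hν.1 x).eq_or_lt with hx | hx
  · simp only [← hx, zero_mul, sub_zero]
  obtain ⟨hM, hMW, hJ⟩ := hpos x hx
  have hZ : ∀ j, pZ (x.2 j) ≠ 0 :=
    fun j => Finset.prod_ne_zero_iff.1 (left_ne_zero_of_mul hx.ne') j (Finset.mem_univ j)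
  have hiid : iid m pZ x.2 = ∏ j, pZ (x.2 j) := rfl
  rw [← mul_sub, hiid,
    log_div_mul_prod_sub_sum_log_div hx.ne' hM.ne' hMW.ne' (fun j => (hJ j).ne') hZ]
  rfl

theorem condMI_nonneg (hpS : ∀ ds, 0 ≤ pS ds) (hpT : IsPMF pT)
    (hP : ∀ ds dt, IsPMF (P ds dt)) : 0 ≤ condMI pS pT P := by
  refine Finset.sum_nonneg fun ds _ => mul_nonneg (hpS ds) ?_
  have hM : IsPMF fun w => ∑ dt, pT dt * P ds dt w :=
    ⟨fun w => Finset.sum_nonneg fun dt _ => mul_nonneg (hpT.1 dt) ((hP ds dt).1 w), by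
      rw [Finset.sum_comm]; simp only [← Finset.mul_sum, (hP _ _).2, mul_one, hpT.2]⟩
  have hν : IsPMF fun x : W × (Fin m → Z) => pT x.2 * P ds x.2 x.1 :=
    ⟨fun x => mul_nonneg (hpT.1 x.2) ((hP ds x.2).1 x.1), by
      simp only [Fintype.sum_prod_type_right, ← Finset.mul_sum, (hP _ _).2, mul_one, hpT.2]⟩
  refine KL_nonneg hν (hM.prod hpT).1 (hM.prod hpT).2.le fun x hx => ?_
  rcases mul_eq_zero.1 hx with h | h
  · refine le_antisymm ((Finset.single_le_sum (f := fun dt => pT dt * P ds dt x.1)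
      (fun dt _ => hν.1 (x.1, dt)) (Finset.mem_univ x.2)).trans h.le) (hν.1 x)
  · simp only [h, zero_mul]

theorem sum_KL_sampleJoint_le_condMI {pZ : Z → ℝ} (hpS : ∀ ds, 0 ≤ pS ds) (hpZ : IsPMF pZ)
    (hP : ∀ ds dt, IsPMF (P ds dt)) :
    ∑ j, KL (sampleJoint pS (iid m pZ) P j) (fun x => margW pS (iid m pZ) P x.1 * pZ x.2) ≤
      condMI pS (iid m pZ) P := by
  calc ∑ j, KL (sampleJoint pS (iid m pZ) P j) (fun x => margW pS (iid m pZ) P x.1 * pZ x.2)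
      = ∑ ds, pS ds * ∑ x : W × (Fin m → Z), iid m pZ x.2 * P ds x.2 x.1 *
          ∑ j, Real.log (sampleJoint pS (iid m pZ) P j (x.1, x.2 j) /
            (margW pS (iid m pZ) P x.1 * pZ (x.2 j))) := by
        simp only [KL]
        rw [sum_sum_sampleJoint_mul]
        simp only [Finset.mul_sum, Fintype.sum_prod_type_right, mul_assoc]
    _ ≤ condMI pS (iid m pZ) P := Finset.sum_le_sum fun ds _ => by
        rcases (hpS ds).eq_or_lt with h | h
        · simp only [← h, zero_mul, le_refl]
        · exact mul_le_mul_of_nonneg_left (sum_mul_sum_log_le_KL hpS hpZ hP h) h.le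

end Superadditivity

section Generalization

variable {W Z : Type*} [Fintype W] [Fintype Z] {n m : ℕ}
  {pS : (Fin n → Z) → ℝ} {pZ : Z → ℝ} {P : (Fin n → Z) → (Fin m → Z) → W → ℝ}

def meanLoss (ℓ : W → Z → ℝ) (pW : W → ℝ) (pZ : Z → ℝ) : ℝ :=
  ∑ w, ∑ z, pW w * pZ z * ℓ w z

theorem cgfLoss_eq (ℓ : W → Z → ℝ) (pW : W → ℝ) (pZ : Z → ℝ) (lam : ℝ) :
    cgfLoss ℓ pW pZ lam = Real.log (∑ x : W × Z, pW x.1 * pZ x.2 *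
      Real.exp (lam * (ℓ x.1 x.2 - meanLoss ℓ pW pZ))) := by
  rw [Fintype.sum_prod_type]; rfl

theorem natCast_mul_gen_iid (hm : 0 < m) (ℓ : W → Z → ℝ) (hpS : IsPMF pS) (hpZ : IsPMF pZ)
    (hP : ∀ ds dt, IsPMF (P ds dt)) :
    (m : ℝ) * gen ℓ pS (iid m pZ) P = ∑ j, ∑ x, sampleJoint pS (iid m pZ) P j x *
      (meanLoss ℓ (margW pS (iid m pZ) P) pZ - ℓ x.1 x.2) := by
  set μ := meanLoss ℓ (margW pS (iid m pZ) P) pZ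
  have hpop :
      ∑ ds, ∑ dt, ∑ w, pS ds * iid m pZ dt * P ds dt w * popRisk ℓ (iid m pZ) w = μ := by
    rw [← sum_mul_margW]
    simp only [popRisk_iid hm ℓ hpZ, μ, meanLoss, Finset.mul_sum, mul_assoc]
  have hmean : ∑ ds, ∑ dt, ∑ w, pS ds * iid m pZ dt * P ds dt w * μ = μ := by
    rw [← sum_mul_margW pS (iid m pZ) P fun _ => μ, ← Finset.sum_mul,
      (hpS.margW hpZ.iid hP).2, one_mul]
  have hemp : ∀ (dt : Fin m → Z) (w : W),
      (m : ℝ) * (μ - empRisk ℓ dt w) = ∑ j, (μ - ℓ w (dt j)) := by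
    intro dt w
    simp only [empRisk, Finset.sum_sub_distrib, Finset.sum_const, Finset.card_univ,
      Fintype.card_fin, nsmul_eq_mul]
    field_simp
  calc (m : ℝ) * gen ℓ pS (iid m pZ) P
      = ∑ ds, ∑ dt, ∑ w, pS ds * iid m pZ dt * P ds dt w * (m * (μ - empRisk ℓ dt w)) := by
        rw [show gen ℓ pS (iid m pZ) P = ∑ ds, ∑ dt, ∑ w,
            pS ds * iid m pZ dt * P ds dt w * (μ - empRisk ℓ dt w) by
          simp only [gen, mul_sub, Finset.sum_sub_distrib, hpop, hmean]]
        simp only [Finset.mul_sum, mul_left_comm (m : ℝ)]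
    _ = _ := by simp only [hemp, sum_sum_sampleJoint_mul]

theorem mul_gen_le (hm : 0 < m) (ℓ : W → Z → ℝ) (hpS : IsPMF pS) (hpZ : IsPMF pZ)
    (hP : ∀ ds dt, IsPMF (P ds dt)) (t : ℝ) :
    t * gen ℓ pS (iid m pZ) P ≤
      condMI pS (iid m pZ) P / m + cgfLoss ℓ (margW pS (iid m pZ) P) pZ (-t) := by
  set pW := margW pS (iid m pZ) P
  set μ := meanLoss ℓ pW pZ
  have hq := (hpS.margW hpZ.iid hP).prod hpZ
  have hDV : ∀ j, ∑ x, sampleJoint pS (iid m pZ) P j x * (-t * (ℓ x.1 x.2 - μ)) ≤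
      KL (sampleJoint pS (iid m pZ) P j) (fun x => pW x.1 * pZ x.2) + cgfLoss ℓ pW pZ (-t) := by
    intro j
    rw [cgfLoss_eq]
    exact sum_mul_le_KL_add_log_sum_mul_exp (hpS.sampleJoint hpZ.iid hP j) hq.1
      (fun x => sampleJoint_iid_eq_zero hpS.1 hpZ.1 (fun ds dt => (hP ds dt).1) j) _
  have hm' : (0 : ℝ) < m := Nat.cast_pos.2 hm
  rw [div_add' _ _ _ hm'.ne', le_div_iff₀' hm']
  calc (m : ℝ) * (t * gen ℓ pS (iid m pZ) P)
      = ∑ j, ∑ x, sampleJoint pS (iid m pZ) P j x * (-t * (ℓ x.1 x.2 - μ)) := by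
        rw [mul_left_comm, natCast_mul_gen_iid hm ℓ hpS hpZ hP, Finset.mul_sum]
        simp only [Finset.mul_sum]
        exact Finset.sum_congr rfl fun j _ => Finset.sum_congr rfl fun x _ => by ring
    _ ≤ ∑ j, (KL (sampleJoint pS (iid m pZ) P j) (fun x => pW x.1 * pZ x.2) +
          cgfLoss ℓ pW pZ (-t)) := Finset.sum_le_sum fun j _ => hDV j
    _ ≤ condMI pS (iid m pZ) P + cgfLoss ℓ pW pZ (-t) * m := by
        rw [Finset.sum_add_distrib, Finset.sum_const, Finset.card_univ, Fintype.card_fin,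
          nsmul_eq_mul, mul_comm]
        linarith [sum_KL_sampleJoint_le_condMI hpS.1 hpZ hP]

end Generalization

theorem gen_upper_bound_subGamma_general
    {W Z : Type*} [Fintype W] [Fintype Z] {n m : ℕ} (hm : 0 < m)
    (ℓ : W → Z → ℝ)
    (pS : (Fin n → Z) → ℝ) (hpS : IsPMF pS)
    (pZ : Z → ℝ) (hpZ : IsPMF pZ)
    (P : (Fin n → Z) → (Fin m → Z) → W → ℝ) (hP : ∀ ds dt, IsPMF (P ds dt))
    (σs2 cs : ℝ) (hcs : 0 < cs)
    (hsub : SubGammaLoss ℓ (margW pS (iid m pZ) P) pZ σs2 cs) :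
    |gen ℓ pS (iid m pZ) P| ≤
      Real.sqrt (2 * σs2 * (condMI pS (iid m pZ) P / m)) +
        cs * (condMI pS (iid m pZ) P / m) := by
  have hI : 0 ≤ condMI pS (iid m pZ) P / m :=
    div_nonneg (condMI_nonneg hpS.1 hpZ.iid hP) m.cast_nonneg
  refine le_sqrt_add_of_forall_mul_le hI hcs fun t ht htc => ?_
  have hψ : ∀ s, |s| = t →
      cgfLoss ℓ (margW pS (iid m pZ) P) pZ s ≤ t ^ 2 * σs2 / (2 * (1 - cs * t)) := by
    rintro s rfl
    simpa only [sq_abs] using hsub s ht htc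
  rcases abs_cases (gen ℓ pS (iid m pZ) P) with ⟨h, -⟩ | ⟨h, -⟩ <;> rw [h]
  · linarith [mul_gen_le hm ℓ hpS hpZ hP t, hψ (-t) (by rw [abs_neg, abs_of_pos ht])]
  · have h' := mul_gen_le hm ℓ hpS hpZ hP (-t)
    rw [neg_neg] at h'
    linarith [hψ t (abs_of_pos ht)]

theorem gen_upper_bound_subGamma
    {W Z : Type*} [Fintype W] [Fintype Z] {n m : ℕ} (hm : 0 < m)
    (ℓ : W → Z → ℝ) (hℓ : ∀ w z, 0 ≤ ℓ w z)
    (pS : (Fin n → Z) → ℝ) (hpS : IsPMF pS)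
    (pZ : Z → ℝ) (hpZ : IsPMF pZ)
    (P : (Fin n → Z) → (Fin m → Z) → W → ℝ) (hP : ∀ ds dt, IsPMF (P ds dt))
    (σs2 cs : ℝ) (hcs : 0 < cs)
    (hsub : SubGammaLoss ℓ (margW pS (iid m pZ) P) pZ σs2 cs) :
    |gen ℓ pS (iid m pZ) P| ≤
      Real.sqrt (2 * σs2 * (condMI pS (iid m pZ) P / m)) +
        cs * (condMI pS (iid m pZ) P / m) :=
  gen_upper_bound_subGamma_general hm ℓ pS hpS pZ hpZ P hP σs2 cs hcs hsub

end TransferGibbs
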